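/- Let H be a real Hilbert space, L, B, A₂, Φ, 𝓛 as follows: L bounded linear selfadjoint with (Lw,w) ≥ c_L‖w‖²; B, A₂ linear monotone; Φ monotone; 𝓛 Lipschitz with constant C_𝓛. Suppose for each g ∈ H the map 𝓢 : H → H is defined so that 𝓢φ is the unique solution of L(𝓢φ) + hB(𝓢φ) + h²A₂(𝓢φ) + h²Φ(𝓢φ) + h²𝓛(𝓢φ) = g₀ + h²𝓐φ, where 𝓐 : H → H is nonexpansive (‖𝓐φ - 𝓐ζ‖ ≤ ‖φ - ζ‖). Then for all φ, ζ ∈ H and h with c_L - h² - C_𝓛h² > 0, ‖𝓢φ - 𝓢ζ‖ ≤ (h / (2√(c_L - h² - C_𝓛h²))) ‖φ - ζ‖. In particular, for h small enough 𝓢 is a contraction and has a unique fixed point. -/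

import Mathlib

open scoped RealInnerProductSpace

/-!
Subtracting the equations for `𝓢 φ` and `𝓢 ζ` and testing with `w = 𝓢 φ - 𝓢 ζ`, the
coercivity of `L`, the monotonicity of `B`, `A₂`, `Φ` and the Lipschitz bound on `𝓛` give
`(c_L - C_𝓛 h²) ‖w‖² ≤ h² ⟪𝓐 φ - 𝓐 ζ, w⟫ ≤ h² ‖φ - ζ‖ ‖w‖`, and Young's inequality
`‖φ - ζ‖ ‖w‖ ≤ ‖w‖² + ‖φ - ζ‖² / 4` turns this into the stated Lipschitz bound.
Banach's fixed point theorem does the rest.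
-/

section

variable {H : Type*} [NormedAddCommGroup H] [InnerProductSpace ℝ H]

theorem neg_mul_sq_le_real_inner_sub_of_lipschitz {f : H → H} {C : ℝ}
    (hf : ∀ w z : H, ‖f w - f z‖ ≤ C * ‖w - z‖) (u v : H) :
    -(C * ‖u - v‖ ^ 2) ≤ ⟪f u - f v, u - v⟫ := by
  have hCS : |⟪f u - f v, u - v⟫| ≤ ‖f u - f v‖ * ‖u - v‖ := abs_real_inner_le_norm _ _
  nlinarith [hf u v, neg_abs_le ⟪f u - f v, u - v⟫, norm_nonneg (u - v)]

def schemeOp (L B A₂ Φ 𝓛 : H → H) (h : ℝ) (u : H) : H :=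
  L u + h • B u + h ^ 2 • A₂ u + h ^ 2 • Φ u + h ^ 2 • 𝓛 u

theorem schemeOp_strongly_monotone (L : H →L[ℝ] H) {cL : ℝ}
    (hLpos : ∀ w : H, cL * ‖w‖ ^ 2 ≤ ⟪L w, w⟫)
    (B A₂ : H →ₗ[ℝ] H) (hB : ∀ w : H, 0 ≤ ⟪B w, w⟫) (hA₂ : ∀ w : H, 0 ≤ ⟪A₂ w, w⟫)
    {Φ : H → H} (hΦ : ∀ w z : H, 0 ≤ ⟪Φ w - Φ z, w - z⟫)
    {𝓛 : H → H} {C𝓛 : ℝ} (h𝓛 : ∀ w z : H, ‖𝓛 w - 𝓛 z‖ ≤ C𝓛 * ‖w - z‖)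
    {h : ℝ} (hh : 0 ≤ h) (u v : H) :
    (cL - C𝓛 * h ^ 2) * ‖u - v‖ ^ 2 ≤
      ⟪schemeOp L B A₂ Φ 𝓛 h u - schemeOp L B A₂ Φ 𝓛 h v, u - v⟫ := by
  have hexpand : ⟪schemeOp L B A₂ Φ 𝓛 h u - schemeOp L B A₂ Φ 𝓛 h v, u - v⟫ =
      ⟪L (u - v), u - v⟫ + h * ⟪B (u - v), u - v⟫ + h ^ 2 * ⟪A₂ (u - v), u - v⟫
        + h ^ 2 * ⟪Φ u - Φ v, u - v⟫ + h ^ 2 * ⟪𝓛 u - 𝓛 v, u - v⟫ := by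
    have hdiff : schemeOp L B A₂ Φ 𝓛 h u - schemeOp L B A₂ Φ 𝓛 h v =
        L (u - v) + h • B (u - v) + h ^ 2 • A₂ (u - v) + h ^ 2 • (Φ u - Φ v)
          + h ^ 2 • (𝓛 u - 𝓛 v) := by
      simp only [schemeOp, map_sub]
      module
    rw [hdiff]
    simp only [inner_add_left, real_inner_smul_left]
  rw [hexpand]
  nlinarith [hLpos (u - v), mul_nonneg hh (hB (u - v)), hA₂ (u - v), hΦ u v,
    neg_mul_sq_le_real_inner_sub_of_lipschitz h𝓛 u v, sq_nonneg h]

theorem norm_sub_le_of_strongly_monotone {T 𝓐 𝓢 : H → H} {m h : ℝ} {g₀ : H}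
    (hT : ∀ u v : H, m * ‖u - v‖ ^ 2 ≤ ⟪T u - T v, u - v⟫)
    (h𝓐 : ∀ φ ζ : H, ‖𝓐 φ - 𝓐 ζ‖ ≤ ‖φ - ζ‖)
    (h𝓢 : ∀ φ : H, T (𝓢 φ) = g₀ + h ^ 2 • 𝓐 φ)
    (hh : 0 ≤ h) (hsmall : 0 < m - h ^ 2) (φ ζ : H) :
    ‖𝓢 φ - 𝓢 ζ‖ ≤ h / (2 * Real.sqrt (m - h ^ 2)) * ‖φ - ζ‖ := by
  set w := 𝓢 φ - 𝓢 ζ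
  have hrhs : ⟪T (𝓢 φ) - T (𝓢 ζ), w⟫ ≤ h ^ 2 * (‖φ - ζ‖ * ‖w‖) := by
    have hCS : ⟪𝓐 φ - 𝓐 ζ, w⟫ ≤ ‖φ - ζ‖ * ‖w‖ :=
      (real_inner_le_norm _ _).trans (mul_le_mul_of_nonneg_right (h𝓐 φ ζ) (norm_nonneg _))
    rw [h𝓢, h𝓢, add_sub_add_left_eq_sub, ← smul_sub, real_inner_smul_left]
    exact mul_le_mul_of_nonneg_left hCS (sq_nonneg h)
  -- Young's inequality `‖φ - ζ‖ ‖w‖ ≤ ‖w‖² + ‖φ - ζ‖² / 4`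
  have hsq : (m - h ^ 2) * ‖w‖ ^ 2 ≤ (h / 2 * ‖φ - ζ‖) ^ 2 := by
    nlinarith [hT (𝓢 φ) (𝓢 ζ), mul_nonneg (sq_nonneg h) (sq_nonneg (‖φ - ζ‖ - 2 * ‖w‖))]
  have hroot : Real.sqrt (m - h ^ 2) * ‖w‖ ≤ h / 2 * ‖φ - ζ‖ := by
    refine (pow_le_pow_iff_left₀ (by positivity) (by positivity) two_ne_zero).mp ?_
    rwa [mul_pow, Real.sq_sqrt hsmall.le]
  rw [div_mul_eq_mul_div, le_div_iff₀ (by positivity)]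
  linarith

end

theorem existsUnique_fixedPoint_of_dist_le {α : Type*} [MetricSpace α] [CompleteSpace α]
    [Nonempty α] {f : α → α} {k : ℝ} (hk0 : 0 ≤ k) (hk1 : k < 1)
    (hf : ∀ x y : α, dist (f x) (f y) ≤ k * dist x y) :
    ∃! x : α, f x = x := by
  have hcontr : ContractingWith ⟨k, hk0⟩ f := ⟨hk1, LipschitzWith.of_dist_le_mul hf⟩
  exact ⟨hcontr.fixedPoint, hcontr.fixedPoint_isFixedPt, fun _ hy => hcontr.fixedPoint_unique hy⟩

theorem stmt13_general {H : Type*} [NormedAddCommGroup H] [InnerProductSpace ℝ H]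
    [CompleteSpace H]
    (L : H →L[ℝ] H) (cL : ℝ)
    (hLpos : ∀ w : H, cL * ‖w‖ ^ 2 ≤ ⟪L w, w⟫)
    (B A₂ : H →ₗ[ℝ] H)
    (hB : ∀ w : H, 0 ≤ ⟪B w, w⟫) (hA₂ : ∀ w : H, 0 ≤ ⟪A₂ w, w⟫)
    (Φ : H → H) (hΦ : ∀ w z : H, 0 ≤ ⟪Φ w - Φ z, w - z⟫)
    (𝓛 : H → H) (C𝓛 : ℝ) (h𝓛 : ∀ w z : H, ‖𝓛 w - 𝓛 z‖ ≤ C𝓛 * ‖w - z‖)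
    (h : ℝ) (hh : 0 < h) (hsmall : 0 < cL - h ^ 2 - C𝓛 * h ^ 2)
    (g₀ : H) (𝓐 : H → H) (h𝓐 : ∀ φ ζ : H, ‖𝓐 φ - 𝓐 ζ‖ ≤ ‖φ - ζ‖)
    (𝓢 : H → H)
    (h𝓢 : ∀ φ : H,
      L (𝓢 φ) + h • B (𝓢 φ) + h ^ 2 • A₂ (𝓢 φ) + h ^ 2 • Φ (𝓢 φ)
        + h ^ 2 • 𝓛 (𝓢 φ) = g₀ + h ^ 2 • 𝓐 φ) :
    (∀ φ ζ : H,
        ‖𝓢 φ - 𝓢 ζ‖ ≤ h / (2 * Real.sqrt (cL - h ^ 2 - C𝓛 * h ^ 2)) * ‖φ - ζ‖) ∧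
      (h / (2 * Real.sqrt (cL - h ^ 2 - C𝓛 * h ^ 2)) < 1 → ∃! φ : H, 𝓢 φ = φ) := by
  have hm : cL - h ^ 2 - C𝓛 * h ^ 2 = (cL - C𝓛 * h ^ 2) - h ^ 2 := by ring
  have hlip : ∀ φ ζ : H,
      ‖𝓢 φ - 𝓢 ζ‖ ≤ h / (2 * Real.sqrt (cL - h ^ 2 - C𝓛 * h ^ 2)) * ‖φ - ζ‖ := by
    rw [hm] at hsmall ⊢
    exact norm_sub_le_of_strongly_monotone
      (schemeOp_strongly_monotone L hLpos B A₂ hB hA₂ hΦ h𝓛 hh.le) h𝓐 h𝓢 hh.le hsmall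
  exact ⟨hlip, fun hk1 => existsUnique_fixedPoint_of_dist_le (by positivity) hk1
    fun φ ζ => by simpa only [dist_eq_norm] using hlip φ ζ⟩

theorem stmt13 {H : Type*} [NormedAddCommGroup H] [InnerProductSpace ℝ H]
    [CompleteSpace H]
    (L : H →L[ℝ] H) (cL : ℝ) (hcL : 0 < cL)
    (hLsym : ∀ w z : H, ⟪L w, z⟫ = ⟪w, L z⟫)
    (hLpos : ∀ w : H, cL * ‖w‖ ^ 2 ≤ ⟪L w, w⟫)
    (B A₂ : H →ₗ[ℝ] H)
    (hB : ∀ w : H, 0 ≤ ⟪B w, w⟫) (hA₂ : ∀ w : H, 0 ≤ ⟪A₂ w, w⟫)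
    (Φ : H → H) (hΦ : ∀ w z : H, 0 ≤ ⟪Φ w - Φ z, w - z⟫)
    (𝓛 : H → H) (C𝓛 : ℝ) (h𝓛 : ∀ w z : H, ‖𝓛 w - 𝓛 z‖ ≤ C𝓛 * ‖w - z‖)
    (h : ℝ) (hh : 0 < h) (hsmall : 0 < cL - h ^ 2 - C𝓛 * h ^ 2)
    (g₀ : H) (𝓐 : H → H) (h𝓐 : ∀ φ ζ : H, ‖𝓐 φ - 𝓐 ζ‖ ≤ ‖φ - ζ‖)
    (𝓢 : H → H)
    (h𝓢 : ∀ φ : H,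
      L (𝓢 φ) + h • B (𝓢 φ) + h ^ 2 • A₂ (𝓢 φ) + h ^ 2 • Φ (𝓢 φ)
        + h ^ 2 • 𝓛 (𝓢 φ) = g₀ + h ^ 2 • 𝓐 φ) :
    (∀ φ ζ : H,
        ‖𝓢 φ - 𝓢 ζ‖ ≤ h / (2 * Real.sqrt (cL - h ^ 2 - C𝓛 * h ^ 2)) * ‖φ - ζ‖) ∧
      (h / (2 * Real.sqrt (cL - h ^ 2 - C𝓛 * h ^ 2)) < 1 → ∃! φ : H, 𝓢 φ = φ) :=
  stmt13_general L cL hLpos B A₂ hB hA₂ Φ hΦ 𝓛 C𝓛 h𝓛 h hh hsmall g₀ 𝓐 h𝓐 𝓢 h𝓢
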